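/- Let S = {(a_1,a_2,a_3) ∈ F^3 : a_1+a_2+a_3 = 0} ⊆ W = F^3. Then σ_{g,h}(S × S) ⊆ S for all g, h ∈ G; consequently the subspace S^σ[G] = span{r g : r ∈ S, g ∈ G} is closed under the bracket of W^σ[G], so it is a Lie subalgebra. -/
import Mathlib


namespace GGA

noncomputable section

variable (F : Type*) [Field F]

/-- The labelling `g_0, …, g_7` of the eight elements of `G = (ℤ/2ℤ)³`:
`g_0=(0,0,0), g_1=(1,0,0), g_2=(0,1,0), g_3=(0,0,1), g_4=(1,1,0), g_5=(0,1,1),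
g_6=(1,1,1), g_7=(1,0,1)`. -/
def lab : Fin 8 → Fin 3 → ZMod 2 :=
  ![![0, 0, 0], ![1, 0, 0], ![0, 1, 0], ![0, 0, 1],
    ![1, 1, 0], ![0, 1, 1], ![1, 1, 1], ![1, 0, 1]]

/-- `star i j` is the unique index `k ∈ {0,…,7}` with `g_i + g_j = g_k`. -/
def star (i j : Fin 8) : Fin 8 := Function.invFun lab (lab i + lab j)

/-- The formula for `σ_{i,i+1}(r,s)` on `W = F³`. -/
def w1 (r s : Fin 3 → F) : Fin 3 → F :=
  ![-(r 1 * s 0) - r 2 * s 2, -(r 1 * s 2) - r 2 * s 0, r 0 * s 1]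

/-- The formula for `σ_{i,i+2}(r,s)` on `W = F³`. -/
def w2 (r s : Fin 3 → F) : Fin 3 → F :=
  ![r 1 * s 2, -(r 0 * s 0) - r 2 * s 1, -(r 0 * s 1) - r 2 * s 0]

/-- The formula for `σ_{i,i+4}(r,s)` on `W = F³`. -/
def w4 (r s : Fin 3 → F) : Fin 3 → F :=
  ![-(r 0 * s 1) - r 1 * s 2, r 2 * s 0, -(r 0 * s 2) - r 1 * s 1]

/-- The twist `σ : G × G → Bil(W × W, W)`, `W = F³`. -/
def sigma3 (i j : Fin 8) (r s : Fin 3 → F) : Fin 3 → F :=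
  if i = 0 ∨ j = 0 ∨ i = j then 0
  else if ((j : ℕ) + 7 - (i : ℕ)) % 7 = 1 then w1 F r s
  else if ((j : ℕ) + 7 - (i : ℕ)) % 7 = 2 then w2 F r s
  else if ((j : ℕ) + 7 - (i : ℕ)) % 7 = 3 then -w4 F s r
  else if ((j : ℕ) + 7 - (i : ℕ)) % 7 = 4 then w4 F r s
  else if ((j : ℕ) + 7 - (i : ℕ)) % 7 = 5 then -w2 F s r
  else -w1 F s r

/-- `single3 i r` is the formal sum `r gᵢ` in `W^σ[G]`, viewed as a function `G → W`. -/
def single3 (i : Fin 8) (r : Fin 3 → F) : Fin 8 → Fin 3 → F :=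
  fun k => if k = i then r else 0

/-- The product of `W^σ[G]`: the unique bilinear extension of
`[r gᵢ, s gⱼ] = σ_{i,j}(r,s) g_{i*j}`. -/
def bracket3 (x y : Fin 8 → Fin 3 → F) : Fin 8 → Fin 3 → F :=
  fun k => ∑ i : Fin 8, ∑ j : Fin 8, if star i j = k then sigma3 F i j (x i) (y j) else 0

/-- The subspace `S = {(a₁,a₂,a₃) : a₁ + a₂ + a₃ = 0}` of `W = F³`. -/
def Sset : Set (Fin 3 → F) := {r | r 0 + r 1 + r 2 = 0}

/-- The subspace `S^σ[G] = span{r g : r ∈ S, g ∈ G}` of `W^σ[G]`. -/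
def SG : Submodule F (Fin 8 → Fin 3 → F) :=
  Submodule.span F {z : Fin 8 → Fin 3 → F | ∃ i : Fin 8, ∃ r ∈ Sset F, z = single3 F i r}

lemma w1_mem {r s : Fin 3 → F} (hr : r ∈ Sset F) (hs : s ∈ Sset F) :
    w1 F r s ∈ Sset F := by
  simp only [Sset, Set.mem_setOf_eq] at *
  simp only [w1, Matrix.cons_val_zero, Matrix.cons_val_one, Matrix.head_cons,
    Matrix.cons_val_two, Matrix.tail_cons]
  linear_combination (-(s 0) - s 2) * hr + r 0 * hs

lemma w2_mem {r s : Fin 3 → F} (hr : r ∈ Sset F) (hs : s ∈ Sset F) :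
    w2 F r s ∈ Sset F := by
  simp only [Sset, Set.mem_setOf_eq] at *
  simp only [w2, Matrix.cons_val_zero, Matrix.cons_val_one, Matrix.head_cons,
    Matrix.cons_val_two, Matrix.tail_cons]
  linear_combination (-(s 0) - s 1) * hr + r 1 * hs

lemma w4_mem {r s : Fin 3 → F} (hr : r ∈ Sset F) (hs : s ∈ Sset F) :
    w4 F r s ∈ Sset F := by
  simp only [Sset, Set.mem_setOf_eq] at *
  simp only [w4, Matrix.cons_val_zero, Matrix.cons_val_one, Matrix.head_cons,
    Matrix.cons_val_two, Matrix.tail_cons]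
  linear_combination s 0 * hr + (-(r 0) - r 1) * hs

lemma neg_mem_S {r : Fin 3 → F} (hr : r ∈ Sset F) : -r ∈ Sset F := by
  simp only [Sset, Set.mem_setOf_eq, Pi.neg_apply] at *
  linear_combination -hr

lemma sigma3_mem (i j : Fin 8) {r s : Fin 3 → F} (hr : r ∈ Sset F) (hs : s ∈ Sset F) :
    sigma3 F i j r s ∈ Sset F := by
  unfold sigma3
  split_ifs
  · simp [Sset]
  · exact w1_mem F hr hs
  · exact w2_mem F hr hs
  · exact neg_mem_S F (w4_mem F hs hr)
  · exact w4_mem F hr hs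
  · exact neg_mem_S F (w2_mem F hs hr)
  · exact neg_mem_S F (w1_mem F hs hr)

lemma sigma3_zero_left (i j : Fin 8) (s : Fin 3 → F) : sigma3 F i j 0 s = 0 := by
  unfold sigma3
  split_ifs <;> funext k <;> fin_cases k <;> simp [w1, w2, w4]

lemma sigma3_zero_right (i j : Fin 8) (r : Fin 3 → F) : sigma3 F i j r 0 = 0 := by
  unfold sigma3
  split_ifs <;> funext k <;> fin_cases k <;> simp [w1, w2, w4]

lemma sigma3_add_left (i j : Fin 8) (r r' s : Fin 3 → F) :
    sigma3 F i j (r + r') s = sigma3 F i j r s + sigma3 F i j r' s := by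
  unfold sigma3
  split_ifs <;> funext k <;> fin_cases k <;>
    simp [w1, w2, w4] <;> ring

lemma sigma3_add_right (i j : Fin 8) (r s s' : Fin 3 → F) :
    sigma3 F i j r (s + s') = sigma3 F i j r s + sigma3 F i j r s' := by
  unfold sigma3
  split_ifs <;> funext k <;> fin_cases k <;>
    simp [w1, w2, w4] <;> ring

lemma sigma3_smul_left (i j : Fin 8) (c : F) (r s : Fin 3 → F) :
    sigma3 F i j (c • r) s = c • sigma3 F i j r s := by
  unfold sigma3
  split_ifs <;> funext k <;> fin_cases k <;>
    simp [w1, w2, w4] <;> ring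

lemma sigma3_smul_right (i j : Fin 8) (c : F) (r s : Fin 3 → F) :
    sigma3 F i j r (c • s) = c • sigma3 F i j r s := by
  unfold sigma3
  split_ifs <;> funext k <;> fin_cases k <;>
    simp [w1, w2, w4] <;> ring

lemma bracket3_add_left (x x' y : Fin 8 → Fin 3 → F) :
    bracket3 F (x + x') y = bracket3 F x y + bracket3 F x' y := by
  funext k
  simp only [bracket3, Pi.add_apply, sigma3_add_left, ← Finset.sum_add_distrib]
  refine Finset.sum_congr rfl fun i _ => Finset.sum_congr rfl fun j _ => ?_
  split_ifs <;> simp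

lemma bracket3_add_right (x y y' : Fin 8 → Fin 3 → F) :
    bracket3 F x (y + y') = bracket3 F x y + bracket3 F x y' := by
  funext k
  simp only [bracket3, Pi.add_apply, sigma3_add_right, ← Finset.sum_add_distrib]
  refine Finset.sum_congr rfl fun i _ => Finset.sum_congr rfl fun j _ => ?_
  split_ifs <;> simp

lemma bracket3_smul_left (c : F) (x y : Fin 8 → Fin 3 → F) :
    bracket3 F (c • x) y = c • bracket3 F x y := by
  funext k
  simp only [bracket3, Pi.smul_apply, sigma3_smul_left, Finset.smul_sum]
  refine Finset.sum_congr rfl fun i _ => Finset.sum_congr rfl fun j _ => ?_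
  split_ifs <;> simp

lemma bracket3_smul_right (c : F) (x y : Fin 8 → Fin 3 → F) :
    bracket3 F x (c • y) = c • bracket3 F x y := by
  funext k
  simp only [bracket3, Pi.smul_apply, sigma3_smul_right, Finset.smul_sum]
  refine Finset.sum_congr rfl fun i _ => Finset.sum_congr rfl fun j _ => ?_
  split_ifs <;> simp

lemma bracket3_zero_left (y : Fin 8 → Fin 3 → F) : bracket3 F 0 y = 0 := by
  funext k
  simp [bracket3, sigma3_zero_left]

lemma bracket3_zero_right (x : Fin 8 → Fin 3 → F) : bracket3 F x 0 = 0 := by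
  funext k
  simp [bracket3, sigma3_zero_right]

lemma bracket3_single (i j : Fin 8) (r s : Fin 3 → F) :
    bracket3 F (single3 F i r) (single3 F j s)
      = single3 F (star i j) (sigma3 F i j r s) := by
  funext k
  simp only [bracket3, single3]
  rw [Finset.sum_eq_single i]
  · rw [Finset.sum_eq_single j]
    · simp [eq_comm]
    · intro b _ hb
      simp [hb, sigma3_zero_right]
    · simp
  · intro b _ hb
    refine Finset.sum_eq_zero fun c _ => ?_
    simp [hb, sigma3_zero_left]
  · simp

/-- The twist `σ` preserves `S`: `σ_{g,h}(S × S) ⊆ S` for all `g,h ∈ G`;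
consequently `S^σ[G]` is closed under the bracket of `W^σ[G]`, i.e. it is a Lie
subalgebra. -/
theorem sigma_preserves_S :
    (∀ (i j : Fin 8), ∀ r ∈ Sset F, ∀ s ∈ Sset F, sigma3 F i j r s ∈ Sset F) ∧
    (∀ x ∈ SG F, ∀ y ∈ SG F, bracket3 F x y ∈ SG F) := by
  refine ⟨fun i j r hr s hs => sigma3_mem F i j hr hs, ?_⟩
  intro x hx y hy
  induction hx using Submodule.span_induction with
  | mem x hxm =>
    induction hy using Submodule.span_induction with
    | mem y hym =>
      obtain ⟨i, r, hr, rfl⟩ := hxm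
      obtain ⟨j, s, hs, rfl⟩ := hym
      rw [bracket3_single]
      exact Submodule.subset_span ⟨star i j, _, sigma3_mem F i j hr hs, rfl⟩
    | zero => rw [bracket3_zero_right]; exact (SG F).zero_mem
    | add y y' _ _ h1 h2 => rw [bracket3_add_right]; exact (SG F).add_mem h1 h2
    | smul c y _ h => rw [bracket3_smul_right]; exact (SG F).smul_mem c h
  | zero => rw [bracket3_zero_left]; exact (SG F).zero_mem
  | add x x' _ _ h1 h2 => rw [bracket3_add_left]; exact (SG F).add_mem h1 h2
  | smul c x _ h => rw [bracket3_smul_left]; exact (SG F).smul_mem c h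

end
end GGA
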